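/- arXiv:2006.13020 — 3 statements merged into one kernel-verified Lean document; each statement's English description precedes it below -/
import Mathlib

section
/- Let (A, d) be a commutative differential graded algebra over ℂ and d^c a degree-one derivation on A with (d^c)² = 0, d d^c + d^c d = 0, satisfying: (i) ker d ∩ ker d^c ∩ Im d = Im(d d^c), and (ii) ker d ∩ ker d^c ∩ Im d^c = Im(d d^c). Then the inclusion (ker d^c, d) ↪ (A, d) induces an isomorphism on d-cohomology. -/
/-!
Injectivity: a `dᶜ`-closed `d`-cocycle that is `d`-exact lies in `Im(d dᶜ)` by (i), hence is
`d` of the `dᶜ`-closed form `dᶜ u`. Surjectivity: for a `d`-cocycle `x`, the form `dᶜ x` is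
`d`-closed by anticommutation, so `dᶜ x = d dᶜ z` by (ii), and `x + d z` is a `dᶜ`-closed
representative of the class of `x`.
-/

namespace Submodule

variable {R M : Type*} [Ring R] [AddCommGroup M] [Module R M] {A B P Q : Submodule R M}

def subquotientMap (hAB : A ≤ B) (hPQ : A ⊓ P ≤ Q) :
    A ⧸ P.comap A.subtype →ₗ[R] B ⧸ Q.comap B.subtype :=
  mapQ _ _ (inclusion hAB) fun x hx => hPQ ⟨x.2, hx⟩

theorem subquotientMap_mk (hAB : A ≤ B) (hPQ : A ⊓ P ≤ Q) (x : M) (hxA : x ∈ A)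
    (hxB : x ∈ B) :
    subquotientMap hAB hPQ (Quotient.mk ⟨x, hxA⟩) = Quotient.mk ⟨x, hxB⟩ :=
  rfl

theorem subquotientMap_injective (hAB : A ≤ B) (hPQ : A ⊓ P ≤ Q) (hQP : A ⊓ Q ≤ P) :
    Function.Injective (subquotientMap hAB hPQ) := by
  rw [← LinearMap.ker_eq_bot, subquotientMap, ker_mapQ, eq_bot_iff, map_le_iff_le_comap,
    comap_bot, ker_mkQ]
  exact fun x hx => hQP ⟨x.2, hx⟩

theorem subquotientMap_surjective (hAB : A ≤ B) (hPQ : A ⊓ P ≤ Q) (hB : B ≤ A ⊔ Q) :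
    Function.Surjective (subquotientMap hAB hPQ) := by
  rintro ⟨y⟩
  obtain ⟨a, ha, q, hq, hy⟩ := mem_sup.mp (hB y.2)
  refine ⟨Quotient.mk ⟨a, ha⟩, (Quotient.eq _).mpr ?_⟩
  simpa [← hy] using neg_mem hq

end Submodule

section DDcLemma

open LinearMap Submodule

variable {R V : Type*} [Ring R] [AddCommGroup V] [Module R V] {d dc : V →ₗ[R] V}

theorem inf_range_le_map_ker_of_ddc (hdc : dc ∘ₗ dc = 0)
    (h1 : ker d ⊓ ker dc ⊓ range d ≤ range (d ∘ₗ dc)) :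
    ker dc ⊓ ker d ⊓ range d ≤ (ker dc).map d :=
  calc ker dc ⊓ ker d ⊓ range d = ker d ⊓ ker dc ⊓ range d := by rw [inf_comm (ker dc)]
    _ ≤ (range dc).map d := range_comp dc d ▸ h1
    _ ≤ (ker dc).map d := map_mono (range_le_ker_iff.mpr hdc)

theorem ker_le_inf_sup_range_of_ddc (hd : d ∘ₗ d = 0) (hdc : dc ∘ₗ dc = 0)
    (hanti : d ∘ₗ dc + dc ∘ₗ d = 0)
    (h2 : ker d ⊓ ker dc ⊓ range dc ≤ range (d ∘ₗ dc)) :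
    ker d ≤ ker dc ⊓ ker d ⊔ range d := by
  have anti (v : V) : d (dc v) + dc (d v) = 0 := by simpa using LinearMap.congr_fun hanti v
  intro x hx
  rw [mem_ker] at hx
  have hdcx : dc x ∈ ker d ⊓ ker dc ⊓ range dc := by
    refine ⟨⟨?_, LinearMap.congr_fun hdc x⟩, x, rfl⟩
    simpa [hx] using anti x
  obtain ⟨z, hz⟩ := h2 hdcx
  have hcocycle : x + d z ∈ ker dc ⊓ ker d := by
    refine ⟨?_, ?_⟩
    · simpa [← hz] using anti z
    · simpa [hx] using LinearMap.congr_fun hd z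
  exact mem_sup.mpr
    ⟨x + d z, hcocycle, -d z, ⟨-z, map_neg d z⟩, add_neg_cancel_right x (d z)⟩

end DDcLemma

/-- If `d, dᶜ` are anticommuting square-zero differentials satisfying the two
ddᶜ-lemma conditions, then the inclusion `(ker dᶜ, d) ↪ (V, d)` induces an
isomorphism on `d`-cohomology. -/
theorem stmt5 {V : Type*} [AddCommGroup V] [Module ℂ V]
    (d dc : V →ₗ[ℂ] V) (hd : d ∘ₗ d = 0) (hdc : dc ∘ₗ dc = 0)
    (hanti : d ∘ₗ dc + dc ∘ₗ d = 0)
    (h1 : LinearMap.ker d ⊓ LinearMap.ker dc ⊓ LinearMap.range d =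
      LinearMap.range (d ∘ₗ dc))
    (h2 : LinearMap.ker d ⊓ LinearMap.ker dc ⊓ LinearMap.range dc =
      LinearMap.range (d ∘ₗ dc)) :
    ∃ f : (↥(LinearMap.ker dc ⊓ LinearMap.ker d) ⧸
          (Submodule.map d (LinearMap.ker dc)).comap
            (LinearMap.ker dc ⊓ LinearMap.ker d).subtype) →ₗ[ℂ]
        (↥(LinearMap.ker d) ⧸ (LinearMap.range d).comap (LinearMap.ker d).subtype),
      (∀ (x : V) (hx : x ∈ LinearMap.ker dc ⊓ LinearMap.ker d)
          (hx' : x ∈ LinearMap.ker d),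
          f (Submodule.Quotient.mk ⟨x, hx⟩) = Submodule.Quotient.mk ⟨x, hx'⟩) ∧
      Function.Bijective f := by
  have hAB : LinearMap.ker dc ⊓ LinearMap.ker d ≤ LinearMap.ker d := inf_le_right
  have hPQ :
      LinearMap.ker dc ⊓ LinearMap.ker d ⊓ (LinearMap.ker dc).map d ≤ LinearMap.range d :=
    inf_le_right.trans LinearMap.map_le_range
  exact ⟨Submodule.subquotientMap hAB hPQ, Submodule.subquotientMap_mk hAB hPQ,
    Submodule.subquotientMap_injective hAB hPQ (inf_range_le_map_ker_of_ddc hdc h1.le),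
    Submodule.subquotientMap_surjective hAB hPQ (ker_le_inf_sup_range_of_ddc hd hdc hanti h2.le)⟩
end

section
/- Let (A, d) be a commutative differential graded algebra and d^c a degree-one derivation with (d^c)² = 0, d d^c + d^c d = 0, satisfying ker d ∩ ker d^c ∩ Im d = Im(d d^c) and ker d ∩ ker d^c ∩ Im d^c = Im(d d^c). Then the induced differential d on the d^c-cohomology H_{d^c}(A) := ker d^c / Im d^c is zero, and the projection (ker d^c, d) → (H_{d^c}(A), 0) induces an isomorphism on d-cohomology. Consequently (A, d) is formal, i.e., connected to (H_d(A), 0) by a chain of DGA quasi-isomorphisms. -/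
/-!
If `x ∈ ker dᶜ`, then `d x` is `d`-exact, `dᶜ`-closed and `d`-closed, so the first `ddᶜ`-condition
writes it as `d dᶜ z`; since `d dᶜ z = dᶜ (-d z)`, the induced differential on `H_{dᶜ}` vanishes, and
`x - dᶜ z` is a `d`-closed representative of the class of `x`, which gives surjectivity. Injectivity
is the second condition: a `d`-closed element of `ker dᶜ` that is `dᶜ`-exact is `d (dᶜ z)`, the
`d`-image of the `dᶜ`-closed element `dᶜ z`.
-/

open LinearMap Submodule

namespace DdcLemma

variable {R V : Type*} [Ring R] [AddCommGroup V] [Module R V] {d dc : V →ₗ[R] V}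

lemma dc_d_eq_neg_d_dc (hanti : d ∘ₗ dc + dc ∘ₗ d = 0) (x : V) : dc (d x) = -d (dc x) :=
  eq_neg_of_add_eq_zero_right (LinearMap.congr_fun hanti x)

lemma d_dc_mem_range_dc (hanti : d ∘ₗ dc + dc ∘ₗ d = 0) (z : V) : d (dc z) ∈ range dc :=
  ⟨-d z, by rw [map_neg, dc_d_eq_neg_d_dc hanti, neg_neg]⟩

lemma d_mem_ker_dc (hanti : d ∘ₗ dc + dc ∘ₗ d = 0) {x : V} (hx : x ∈ ker dc) : d x ∈ ker dc := by
  rw [mem_ker, dc_d_eq_neg_d_dc hanti, mem_ker.1 hx, map_zero, neg_zero]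

lemma exists_d_dc_eq_d (hd : d ∘ₗ d = 0) (hanti : d ∘ₗ dc + dc ∘ₗ d = 0)
    (h1 : ker d ⊓ ker dc ⊓ range d = range (d ∘ₗ dc)) {x : V} (hx : x ∈ ker dc) :
    ∃ z, d (dc z) = d x := by
  have hdx : d x ∈ ker d ⊓ ker dc ⊓ range d :=
    ⟨⟨LinearMap.congr_fun hd x, d_mem_ker_dc hanti hx⟩, x, rfl⟩
  rw [h1] at hdx
  exact hdx

lemma d_mem_range_dc_of_mem_ker_dc (hd : d ∘ₗ d = 0) (hanti : d ∘ₗ dc + dc ∘ₗ d = 0)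
    (h1 : ker d ⊓ ker dc ⊓ range d = range (d ∘ₗ dc)) {x : V} (hx : x ∈ ker dc) :
    d x ∈ range dc := by
  obtain ⟨z, hz⟩ := exists_d_dc_eq_d hd hanti h1 hx
  exact hz ▸ d_dc_mem_range_dc hanti z

variable (d dc) in
def toDcCohomology :
    ↥(ker dc ⊓ ker d) →ₗ[R] ↥(ker dc) ⧸ (range dc).comap (ker dc).subtype :=
  ((range dc).comap (ker dc).subtype).mkQ ∘ₗ inclusion inf_le_left

lemma toDcCohomology_eq_zero_iff (x : ↥(ker dc ⊓ ker d)) :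
    toDcCohomology d dc x = 0 ↔ (x : V) ∈ range dc :=
  Quotient.mk_eq_zero _

lemma comap_map_d_le_ker_toDcCohomology (hd : d ∘ₗ d = 0) (hanti : d ∘ₗ dc + dc ∘ₗ d = 0)
    (h1 : ker d ⊓ ker dc ⊓ range d = range (d ∘ₗ dc)) :
    (map d (ker dc)).comap (ker dc ⊓ ker d).subtype ≤ ker (toDcCohomology d dc) := by
  rintro x ⟨y, hy, hyx⟩
  rw [mem_ker, toDcCohomology_eq_zero_iff, ← Submodule.subtype_apply, ← hyx]
  exact d_mem_range_dc_of_mem_ker_dc hd hanti h1 hy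

lemma ker_toDcCohomology_le_comap_map_d (hdc : dc ∘ₗ dc = 0)
    (h2 : ker d ⊓ ker dc ⊓ range dc = range (d ∘ₗ dc)) :
    ker (toDcCohomology d dc) ≤ (map d (ker dc)).comap (ker dc ⊓ ker d).subtype := by
  intro x hx
  have hx' : (x : V) ∈ ker d ⊓ ker dc ⊓ range dc :=
    ⟨⟨x.2.2, x.2.1⟩, (toDcCohomology_eq_zero_iff x).1 hx⟩
  rw [h2] at hx'
  obtain ⟨z, hz⟩ := hx'
  exact ⟨dc z, LinearMap.congr_fun hdc z, hz⟩

lemma toDcCohomology_surjective (hd : d ∘ₗ d = 0) (hdc : dc ∘ₗ dc = 0)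
    (hanti : d ∘ₗ dc + dc ∘ₗ d = 0) (h1 : ker d ⊓ ker dc ⊓ range d = range (d ∘ₗ dc)) :
    Function.Surjective (toDcCohomology d dc) := by
  intro q
  obtain ⟨⟨x, hx⟩, rfl⟩ := mkQ_surjective _ q
  obtain ⟨z, hz⟩ := exists_d_dc_eq_d hd hanti h1 hx
  have hdc_closed : x - dc z ∈ ker dc := by
    rw [mem_ker, map_sub, mem_ker.1 hx, ← LinearMap.comp_apply, hdc, LinearMap.zero_apply, sub_zero]
  have hd_closed : x - dc z ∈ ker d := by rw [mem_ker, map_sub, hz, sub_self]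
  refine ⟨⟨x - dc z, hdc_closed, hd_closed⟩, (Submodule.Quotient.eq _).2 ⟨-z, ?_⟩⟩
  simp

end DdcLemma

open DdcLemma in
/-- Under the two ddᶜ-lemma conditions, the differential induced by `d` on the
`dᶜ`-cohomology `ker dᶜ / Im dᶜ` is zero, and the projection
`(ker dᶜ, d) → (H_{dᶜ}, 0)` induces an isomorphism on `d`-cohomology
(the two quasi-isomorphisms establishing formality). -/
theorem stmt6 {V : Type*} [AddCommGroup V] [Module ℂ V]
    (d dc : V →ₗ[ℂ] V) (hd : d ∘ₗ d = 0) (hdc : dc ∘ₗ dc = 0)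
    (hanti : d ∘ₗ dc + dc ∘ₗ d = 0)
    (h1 : LinearMap.ker d ⊓ LinearMap.ker dc ⊓ LinearMap.range d =
      LinearMap.range (d ∘ₗ dc))
    (h2 : LinearMap.ker d ⊓ LinearMap.ker dc ⊓ LinearMap.range dc =
      LinearMap.range (d ∘ₗ dc)) :
    (∀ x ∈ LinearMap.ker dc, d x ∈ LinearMap.range dc) ∧
    ∃ g : (↥(LinearMap.ker dc ⊓ LinearMap.ker d) ⧸
          (Submodule.map d (LinearMap.ker dc)).comap
            (LinearMap.ker dc ⊓ LinearMap.ker d).subtype) →ₗ[ℂ]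
        (↥(LinearMap.ker dc) ⧸ (LinearMap.range dc).comap (LinearMap.ker dc).subtype),
      (∀ (x : V) (hx : x ∈ LinearMap.ker dc ⊓ LinearMap.ker d),
          g (Submodule.Quotient.mk ⟨x, hx⟩) = Submodule.Quotient.mk ⟨x, hx.1⟩) ∧
      Function.Bijective g := by
  have hker := comap_map_d_le_ker_toDcCohomology hd hanti h1
  refine ⟨fun x hx => d_mem_range_dc_of_mem_ker_dc hd hanti h1 hx,
    liftQ _ (toDcCohomology d dc) hker, fun _ _ => rfl, ?_, ?_⟩
  · rw [← LinearMap.ker_eq_bot]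
    exact ker_liftQ_eq_bot _ _ _ (ker_toDcCohomology_le_comap_map_d hdc h2)
  · rw [← LinearMap.range_eq_top, range_liftQ, LinearMap.range_eq_top]
    exact toDcCohomology_surjective hd hdc hanti h1
end

section
/- Let U be an open set on which the d_φ-, ∂-, and ∂̄_φ-Poincaré lemmas hold (as in the abstract double complex setting with ∂² = ∂̄_φ² = ∂∂̄_φ + ∂̄_φ∂ = 0). Suppose θ ∈ A^{p,q}(U) with p ≥ 1, q ≥ 1 is d_φ-closed (i.e., ∂θ = ∂̄_φθ = 0, noting d_φθ has components ∂θ and ∂̄_φθ). Then θ ∈ ∂∂̄_φ A^{p-1,q-1}(U), i.e., θ = ∂∂̄_φ β for some β ∈ A^{p-1,q-1}(U). -/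
/-!
By the `d_φ`-Poincaré lemma `θ = (D + E) y`. Let `f s` be the `(s, p + q - 1 - s)`-component of
`y`; comparing components gives `D (f (s - 1)) + E (f s) = θ` for `s = p` and `= 0` otherwise.
As `f` has finite support, a descending zigzag with the `∂`-Poincaré lemma gives
`f p = D w + E z`, and an ascending one with the `∂̄_φ`-Poincaré lemma gives
`f (p - 1) = E z' + D w'`. Hence `θ = D (f (p - 1)) + E (f p) = D (E z') + E (D w) = D (E (z' - w))`.
-/

open DirectSum

section Decomposition

variable {ι M σ : Type*} [DecidableEq ι] [AddCommMonoid M] [SetLike σ M] [AddSubmonoidClass σ M]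
  (ℳ : ι → σ) [Decomposition ℳ]

theorem DirectSum.decompose_map_apply_of_mapsTo {F : Type*} [FunLike F M M]
    [AddMonoidHomClass F M M] (φ : F) {g : ι → ι} (hg : g.Injective)
    (hφ : ∀ i, ∀ x ∈ ℳ i, φ x ∈ ℳ (g i)) (x : M) {i j : ι} (hij : g i = j) :
    (decompose ℳ (φ x) j : M) = φ (decompose ℳ x i) := by
  subst hij
  induction x using Decomposition.inductionOn ℳ with
  | zero => simp
  | @homogeneous j m =>
    obtain ⟨m, hm⟩ := m
    obtain rfl | hji := eq_or_ne j i
    · rw [decompose_of_mem_same ℳ hm, decompose_of_mem_same ℳ (hφ j m hm)]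
    · rw [decompose_of_mem_ne ℳ hm hji, decompose_of_mem_ne ℳ (hφ j m hm) (hg.ne hji), map_zero]
  | add x y hx hy => simp [hx, hy]

theorem DirectSum.finite_support_decompose_comp {κ : Type*} {g : κ → ι} (hg : g.Injective)
    (x : M) : (Function.support fun s => (decompose ℳ x (g s) : M)).Finite := by
  classical
  refine ((decompose ℳ x).support.finite_toSet.preimage hg.injOn).subset fun s hs => ?_
  simpa using hs

end Decomposition

section Bigraded

variable {R V : Type*} [Ring R] [AddCommGroup V] [Module R V] {A : ℤ → ℤ → Submodule R V}
  {D E : V →ₗ[R] V}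

theorem mem_of_mem_of_indices_eq {a b a' b' : ℤ} {x : V} (hx : x ∈ A a b) (ha : a = a')
    (hb : b = b') : x ∈ A a' b' :=
  ha ▸ hb ▸ hx

theorem decompose_add_apply_of_bidegree [Decomposition fun i : ℤ × ℤ => A i.1 i.2]
    (hDgr : ∀ a b, ∀ x ∈ A a b, D x ∈ A (a + 1) b) (hEgr : ∀ a b, ∀ x ∈ A a b, E x ∈ A a (b + 1))
    (x : V) (a b : ℤ) :
    (decompose (fun i : ℤ × ℤ => A i.1 i.2) ((D + E) x) (a, b) : V) =
      D (decompose (fun i : ℤ × ℤ => A i.1 i.2) x (a - 1, b)) +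
        E (decompose (fun i : ℤ × ℤ => A i.1 i.2) x (a, b - 1)) := by
  have hD := decompose_map_apply_of_mapsTo _ D
    ((add_left_injective 1).prodMap Function.injective_id)
    (fun i => hDgr i.1 i.2) x (i := (a - 1, b)) (j := (a, b)) (by simp)
  have hE := decompose_map_apply_of_mapsTo _ E
    (Function.injective_id.prodMap (add_left_injective 1))
    (fun i => hEgr i.1 i.2) x (i := (a, b - 1)) (j := (a, b)) (by simp)
  rw [LinearMap.add_apply, decompose_add, DirectSum.add_apply, Submodule.coe_add, hD, hE]

theorem exists_eq_D_add_E_of_D_add_E_eq_zero (hEgr : ∀ a b, ∀ x ∈ A a b, E x ∈ A a (b + 1))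
    (hE : E ∘ₗ E = 0) (hDE : D ∘ₗ E + E ∘ₗ D = 0)
    (hDP : ∀ a b, 1 ≤ a → ∀ x ∈ A a b, D x = 0 → ∃ y ∈ A (a - 1) b, x = D y)
    {a b : ℤ} (ha : 1 ≤ a) {x w z : V} (hx : x ∈ A a b) (hw : w ∈ A a (b - 1))
    (h : D x + E (D w + E z) = 0) : ∃ w' ∈ A (a - 1) b, x = D w' + E w := by
  have hEE : E (E z) = 0 := LinearMap.congr_fun hE z
  have hED : E (D w) = -D (E w) := eq_neg_of_add_eq_zero_right (LinearMap.congr_fun hDE w)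
  have hclosed : D (x - E w) = 0 := by
    rwa [map_add, hEE, add_zero, hED, ← sub_eq_add_neg, ← map_sub] at h
  obtain ⟨w', hw', hxw'⟩ := hDP a b ha _
    (sub_mem hx (mem_of_mem_of_indices_eq (hEgr _ _ w hw) rfl (sub_add_cancel b 1))) hclosed
  exact ⟨w', hw', sub_eq_iff_eq_add.mp hxw'⟩

theorem exists_eq_D_add_E_of_le (hEgr : ∀ a b, ∀ x ∈ A a b, E x ∈ A a (b + 1))
    (hE : E ∘ₗ E = 0) (hDE : D ∘ₗ E + E ∘ₗ D = 0)
    (hDP : ∀ a b, 1 ≤ a → ∀ x ∈ A a b, D x = 0 → ∃ y ∈ A (a - 1) b, x = D y)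
    {k p : ℤ} (hp : 1 ≤ p) {f : ℤ → V} (hf : ∀ s, f s ∈ A s (k - 1 - s))
    (hfin : (Function.support f).Finite) (hclosed : ∀ s, p < s → D (f (s - 1)) + E (f s) = 0) :
    ∀ s, p ≤ s → ∃ w ∈ A (s - 1) (k - 1 - s), ∃ z ∈ A s (k - 2 - s), f s = D w + E z := by
  obtain ⟨N, hN⟩ := hfin.bddAbove
  have hzero : ∀ s, N < s → ∃ w ∈ A (s - 1) (k - 1 - s), ∃ z ∈ A s (k - 2 - s), f s = D w + E z :=
    fun s hs => ⟨0, zero_mem _, 0, zero_mem _, by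
      rw [Function.notMem_support.mp fun h => (hN h).not_gt hs, map_zero, map_zero, add_zero]⟩
  have hbelow : ∀ s ≤ N + 1, p ≤ s →
      ∃ w ∈ A (s - 1) (k - 1 - s), ∃ z ∈ A s (k - 2 - s), f s = D w + E z := by
    intro s hs
    induction s, hs using Int.leInductionDown with
    | base => exact fun _ => hzero _ (lt_add_one N)
    | pred n _ ih =>
      intro hpn
      obtain ⟨w, hw, z, -, hfn⟩ := ih (by omega)
      obtain ⟨w', hw', hfn'⟩ := exists_eq_D_add_E_of_D_add_E_eq_zero hEgr hE hDE hDP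
        (b := k - n) (by omega) (mem_of_mem_of_indices_eq (hf (n - 1)) rfl (by ring))
        (mem_of_mem_of_indices_eq hw rfl (by ring)) (hfn ▸ hclosed n (by omega))
      exact ⟨w', mem_of_mem_of_indices_eq hw' rfl (by ring), w,
        mem_of_mem_of_indices_eq hw rfl (by ring), hfn'⟩
  intro s hs
  obtain hNs | hsN := lt_or_ge N s
  · exact hzero s hNs
  · exact hbelow s (by omega) hs

theorem exists_eq_E_add_D_of_lt (hDgr : ∀ a b, ∀ x ∈ A a b, D x ∈ A (a + 1) b)
    (hD : D ∘ₗ D = 0) (hDE : D ∘ₗ E + E ∘ₗ D = 0)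
    (hEP : ∀ a b, 1 ≤ b → ∀ x ∈ A a b, E x = 0 → ∃ y ∈ A a (b - 1), x = E y)
    {k p : ℤ} (hq : 1 ≤ k - p) {f : ℤ → V} (hf : ∀ s, f s ∈ A s (k - 1 - s))
    (hfin : (Function.support f).Finite) (hclosed : ∀ s, s < p → D (f (s - 1)) + E (f s) = 0) :
    ∀ s, s < p → ∃ z ∈ A s (k - 2 - s), ∃ w ∈ A (s - 1) (k - 1 - s), f s = E z + D w := by
  -- transposing the bigrading and swapping `D` with `E` turns this into `exists_eq_D_add_E_of_le`
  have := exists_eq_D_add_E_of_le (A := fun a b => A b a) (D := E) (E := D)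
    (fun a b => hDgr b a) hD (by rwa [add_comm]) (fun a b => hEP b a) hq
    (f := fun t => f (k - 1 - t))
    (fun t => mem_of_mem_of_indices_eq (hf (k - 1 - t)) rfl (sub_sub_cancel _ _))
    (Function.support_comp_eq_preimage f _ ▸ hfin.preimage sub_right_injective.injOn)
    (fun t ht => by
      rw [show k - 1 - (t - 1) = k - t by ring, show k - 1 - t = k - t - 1 by ring, add_comm]
      exact hclosed (k - t) (by omega))
  intro s hs
  obtain ⟨z, hz, w, hw, h⟩ := this (k - 1 - s) (by omega)
  refine ⟨z, mem_of_mem_of_indices_eq hz (by ring) (by ring), w,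
    mem_of_mem_of_indices_eq hw (by ring) (by ring), ?_⟩
  rwa [sub_sub_cancel] at h

theorem exists_D_add_E_eq_D_comp_E (hDgr : ∀ a b, ∀ x ∈ A a b, D x ∈ A (a + 1) b)
    (hEgr : ∀ a b, ∀ x ∈ A a b, E x ∈ A a (b + 1))
    (hD : D ∘ₗ D = 0) (hE : E ∘ₗ E = 0) (hDE : D ∘ₗ E + E ∘ₗ D = 0)
    (hEP : ∀ a b, 1 ≤ b → ∀ x ∈ A a b, E x = 0 → ∃ y ∈ A a (b - 1), x = E y)
    (hDP : ∀ a b, 1 ≤ a → ∀ x ∈ A a b, D x = 0 → ∃ y ∈ A (a - 1) b, x = D y)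
    {k p : ℤ} (hp : 1 ≤ p) (hq : 1 ≤ k - p) {f : ℤ → V} (hf : ∀ s, f s ∈ A s (k - 1 - s))
    (hfin : (Function.support f).Finite) (hclosed : ∀ s, s ≠ p → D (f (s - 1)) + E (f s) = 0) :
    ∃ β ∈ A (p - 1) (k - 1 - p), D (f (p - 1)) + E (f p) = D (E β) := by
  obtain ⟨w, hw, z, -, hfp⟩ := exists_eq_D_add_E_of_le hEgr hE hDE hDP hp hf hfin
    (fun s hs => hclosed s hs.ne') p le_rfl
  obtain ⟨z', hz', w', -, hfp'⟩ := exists_eq_E_add_D_of_lt hDgr hD hDE hEP hq hf hfin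
    (fun s hs => hclosed s hs.ne) (p - 1) (sub_one_lt p)
  refine ⟨z' - w, sub_mem (mem_of_mem_of_indices_eq hz' rfl (by ring))
    (mem_of_mem_of_indices_eq hw rfl (by ring)), ?_⟩
  have hDD : D (D w') = 0 := LinearMap.congr_fun hD w'
  have hEE : E (E z) = 0 := LinearMap.congr_fun hE z
  have hED : E (D w) = -D (E w) := eq_neg_of_add_eq_zero_right (LinearMap.congr_fun hDE w)
  rw [hfp, hfp', map_add, map_add, hDD, hEE, hED, map_sub, map_sub]
  abel

end Bigraded

/-- Abstract local ∂∂̄_φ-lemma (Lemma 3.1(2)(i)): in a double complex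
`(A^{•,•}, ∂ = D, ∂̄_φ = E)` on which the `d_φ`-, `∂`- and `∂̄_φ`-Poincaré lemmas hold,
a `d_φ`-closed `(p,q)`-form `θ` with `p ≥ 1`, `q ≥ 1` lies in `∂∂̄_φ A^{p-1,q-1}`. -/
theorem stmt19 {V : Type*} [AddCommGroup V] [Module ℂ V]
    (Apq : ℤ → ℤ → Submodule ℂ V)
    (hinternal : DirectSum.IsInternal (fun pq : ℤ × ℤ => Apq pq.1 pq.2))
    (D E : V →ₗ[ℂ] V)
    (hDgr : ∀ p q, ∀ x ∈ Apq p q, D x ∈ Apq (p + 1) q)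
    (hEgr : ∀ p q, ∀ x ∈ Apq p q, E x ∈ Apq p (q + 1))
    (hD : D ∘ₗ D = 0) (hE : E ∘ₗ E = 0) (hDE : D ∘ₗ E + E ∘ₗ D = 0)
    -- the `d_φ`-Poincaré lemma
    (hdP : ∀ k : ℤ, 1 ≤ k → ∀ x ∈ (⨆ p : ℤ, Apq p (k - p)), (D + E) x = 0 →
      ∃ y ∈ (⨆ p : ℤ, Apq p (k - 1 - p)), x = (D + E) y)
    -- the `∂̄_φ`-Poincaré lemma
    (hEP : ∀ p q : ℤ, 1 ≤ q → ∀ x ∈ Apq p q, E x = 0 → ∃ y ∈ Apq p (q - 1), x = E y)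
    -- the `∂`-Poincaré lemma
    (hDP : ∀ p q : ℤ, 1 ≤ p → ∀ x ∈ Apq p q, D x = 0 → ∃ y ∈ Apq (p - 1) q, x = D y)
    (p q : ℤ) (hp : 1 ≤ p) (hq : 1 ≤ q)
    (θ : V) (hθ : θ ∈ Apq p q) (hθD : D θ = 0) (hθE : E θ = 0) :
    ∃ β ∈ Apq (p - 1) (q - 1), θ = D (E β) := by
  let ℳ : ℤ × ℤ → Submodule ℂ V := fun i => Apq i.1 i.2
  have : Decomposition ℳ := hinternal.chooseDecomposition
  obtain ⟨y, -, hy⟩ := hdP (p + q) (by omega) θ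
    (Submodule.mem_iSup_of_mem p (by rwa [add_sub_cancel_left])) (by simp [hθD, hθE])
  set f : ℤ → V := fun s => decompose ℳ y (s, p + q - 1 - s)
  have hθf : ∀ s, D (f (s - 1)) + E (f s) = decompose ℳ θ (s, p + q - s) := fun s => by
    rw [hy, decompose_add_apply_of_bidegree hDgr hEgr, show p + q - s - 1 = p + q - 1 - s by ring,
      ← show p + q - 1 - (s - 1) = p + q - s by ring]
  obtain ⟨β, hβ, hθβ⟩ := exists_D_add_E_eq_D_comp_E hDgr hEgr hD hE hDE hEP hDP hp
    (k := p + q) (f := f) (by omega) (fun s => (decompose ℳ y (s, p + q - 1 - s)).2)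
    (finite_support_decompose_comp ℳ (fun s t h => congrArg Prod.fst h) y)
    (fun s hs => by rw [hθf, decompose_of_mem_ne ℳ (i := (p, q)) hθ (by simp [hs.symm])])
  refine ⟨β, mem_of_mem_of_indices_eq hβ rfl (by ring), ?_⟩
  rw [← hθβ, hθf, add_sub_cancel_left, decompose_of_mem_same ℳ (i := (p, q)) hθ]
end
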